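/- Let α, β > 0 satisfy α + 2β = 1. Then there exists a constant C > 0 such that for every real square-summable sequence (a_ℓ)_{ℓ≥1}: the double series Σ_{ℓ,ℓ′≥1} a_ℓ·a_{ℓ′} / ((ℓ^α + (ℓ′)^α)·ℓ^β·(ℓ′)^β) converges absolutely, and 0 ≤ Σ_{ℓ,ℓ′≥1} a_ℓ·a_{ℓ′} / ((ℓ^α + (ℓ′)^α)·ℓ^β·(ℓ′)^β) ≤ C·Σ_{ℓ≥1} a_ℓ². -/

import Mathlib

/-!
Write `s = α / 2`, so that `β = 1 / 2 - s`. The kernel `K(ℓ, ℓ') = 1 / ((ℓ^α + ℓ'^α) ℓ^β ℓ'^β)` is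
the Cauchy kernel `1 / (X_ℓ + X_ℓ')`, `X_ℓ = ℓ^α`, conjugated by the diagonal `ℓ^(-β)`. Since
`1 / (X + Y) = ∫₀¹ u^(X + Y - 1) du`, the form equals `∫₀¹ (∑ a_ℓ ℓ^(-β) u^(X_ℓ - 1/2))² du ≥ 0`.

The upper bound is Schur's test with the weight `p ℓ = ℓ^(-1/2)`: the row sums are
`∑_ℓ' K(ℓ, ℓ') p ℓ' = p ℓ · ∑_ℓ' ℓ^s ℓ'^(s-1) / (ℓ^(2s) + ℓ'^(2s))`. Dropping `ℓ'^(2s)` for `ℓ' ≤ ℓ`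
and `ℓ^(2s)` for `ℓ' > ℓ` and comparing with `∫ t^(s-1)` and `∫ t^(-s-1)` bounds the last sum
by `1/s + 1/s = 4/α`.
-/

open Real Filter

lemma mul_add_one_rpow_sub_one_le_sub {s t : ℝ} (hs₀ : 0 ≤ s) (hs₁ : s ≤ 1) (ht : 0 ≤ t) :
    s * (t + 1) ^ (s - 1) ≤ (t + 1) ^ s - t ^ s := by
  have hderiv : HasDerivAt (fun x : ℝ => x ^ s) (s * (t + 1) ^ (s - 1)) (t + 1) :=
    hasDerivAt_rpow_const (Or.inl (by positivity))
  have := (concaveOn_rpow hs₀ hs₁).le_slope_of_hasDerivAt (Set.mem_Ici.2 ht)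
    (Set.mem_Ici.2 (by positivity)) (lt_add_one t) hderiv
  simpa [slope_def_field] using this

theorem sum_range_add_one_rpow_sub_one_le {s : ℝ} (hs₀ : 0 < s) (hs₁ : s ≤ 1) (N : ℕ) :
    ∑ n ∈ Finset.range N, ((n : ℝ) + 1) ^ (s - 1) ≤ (N : ℝ) ^ s / s := by
  rw [le_div_iff₀ hs₀, Finset.sum_mul]
  calc ∑ n ∈ Finset.range N, ((n : ℝ) + 1) ^ (s - 1) * s
      ≤ ∑ n ∈ Finset.range N, ((((n + 1 : ℕ) : ℝ)) ^ s - ((n : ℕ) : ℝ) ^ s) := by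
        gcongr with n
        push_cast
        linarith [mul_add_one_rpow_sub_one_le_sub hs₀.le hs₁ n.cast_nonneg]
    _ = (N : ℝ) ^ s := by
        rw [Finset.sum_range_sub (fun n : ℕ => (n : ℝ) ^ s)]
        simp [zero_rpow hs₀.ne']

theorem summable_and_tsum_add_rpow_neg_sub_one_le {s c : ℝ} (hs : 0 < s) (hc : 0 < c) :
    Summable (fun k : ℕ => (c + k + 1) ^ (-s - 1)) ∧
      ∑' k : ℕ, (c + k + 1) ^ (-s - 1) ≤ c ^ (-s) / s := by
  have hnonneg : ∀ k : ℕ, 0 ≤ (c + k + 1) ^ (-s - 1) := fun k => rpow_nonneg (by positivity) _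
  have hpartial : ∀ K : ℕ, ∑ k ∈ Finset.range K, (c + k + 1) ^ (-s - 1) ≤ c ^ (-s) / s := by
    intro K
    have hanti : AntitoneOn (fun x : ℝ => x ^ (-s - 1)) (Set.Icc c (c + K)) :=
      (antitoneOn_rpow_Ioi_of_exponent_nonpos (by linarith)).mono
        fun x hx => lt_of_lt_of_le hc hx.1
    have hzero : (0 : ℝ) ∉ Set.uIcc c (c + K) := by
      rw [Set.uIcc_of_le (le_add_of_nonneg_right K.cast_nonneg)]
      exact fun h => hc.not_ge h.1
    calc ∑ k ∈ Finset.range K, (c + k + 1) ^ (-s - 1)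
        = ∑ k ∈ Finset.range K, (c + ((k + 1 : ℕ) : ℝ)) ^ (-s - 1) := by
          push_cast; simp only [add_assoc]
      _ ≤ ∫ x in c..c + K, x ^ (-s - 1) := hanti.sum_le_integral
      _ = (c ^ (-s) - (c + K) ^ (-s)) / s := by
          rw [integral_rpow (Or.inr ⟨by linarith, hzero⟩), sub_add_cancel, div_neg,
            ← neg_div, neg_sub]
      _ ≤ c ^ (-s) / s := by
          gcongr
          exact sub_le_self _ (by positivity)
  exact ⟨summable_of_sum_range_le hnonneg hpartial,
    Real.tsum_le_of_sum_range_le hnonneg hpartial⟩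

theorem summable_and_tsum_rpow_mul_rpow_div_le {s : ℝ} (hs₀ : 0 < s) (hs₁ : s ≤ 1) (m : ℕ) :
    Summable (fun n : ℕ => ((m : ℝ) + 1) ^ s * ((n : ℝ) + 1) ^ (s - 1) /
        (((m : ℝ) + 1) ^ (2 * s) + ((n : ℝ) + 1) ^ (2 * s))) ∧
      ∑' n : ℕ, ((m : ℝ) + 1) ^ s * ((n : ℝ) + 1) ^ (s - 1) /
        (((m : ℝ) + 1) ^ (2 * s) + ((n : ℝ) + 1) ^ (2 * s)) ≤ 2 / s := by
  set x : ℝ := (m : ℝ) + 1 with hx_def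
  have hx : 0 < x := by positivity
  set g : ℕ → ℝ := fun n =>
    x ^ s * ((n : ℝ) + 1) ^ (s - 1) / (x ^ (2 * s) + ((n : ℝ) + 1) ^ (2 * s))
  have hg : ∀ n, 0 ≤ g n := fun n => by positivity
  have hhead : ∀ n : ℕ, g n ≤ x ^ (-s) * ((n : ℝ) + 1) ^ (s - 1) := by
    intro n
    calc g n ≤ x ^ s * ((n : ℝ) + 1) ^ (s - 1) / x ^ (2 * s) := by
          simp only [g]
          gcongr
          exact le_add_of_nonneg_right (by positivity)
      _ = x ^ (-s) * ((n : ℝ) + 1) ^ (s - 1) := by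
          rw [two_mul, rpow_add hx, rpow_neg hx.le]
          field_simp
  have htail : ∀ k : ℕ, g (k + (m + 1)) ≤ x ^ s * (x + k + 1) ^ (-s - 1) := by
    intro k
    have hy : ((k + (m + 1) : ℕ) : ℝ) + 1 = x + k + 1 := by push_cast; ring
    have hy₀ : 0 < x + k + 1 := by positivity
    simp only [g, hy]
    calc x ^ s * (x + k + 1) ^ (s - 1) / (x ^ (2 * s) + (x + k + 1) ^ (2 * s))
        ≤ x ^ s * (x + k + 1) ^ (s - 1) / (x + k + 1) ^ (2 * s) := by
          gcongr
          exact le_add_of_nonneg_left (by positivity)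
      _ = x ^ s * (x + k + 1) ^ (-s - 1) := by
          rw [mul_div_assoc, ← rpow_sub hy₀]
          ring_nf
  obtain ⟨htail_summable, htail_le⟩ := summable_and_tsum_add_rpow_neg_sub_one_le hs₀ hx
  have hg_tail : Summable (fun k => g (k + (m + 1))) :=
    (htail_summable.mul_left _).of_nonneg_of_le (fun k => hg _) htail
  have hg_summable : Summable g := (summable_nat_add_iff (m + 1)).mp hg_tail
  have hhead_le : ∑ n ∈ Finset.range (m + 1), g n ≤ 1 / s :=
    calc ∑ n ∈ Finset.range (m + 1), g n
        ≤ x ^ (-s) * ∑ n ∈ Finset.range (m + 1), ((n : ℝ) + 1) ^ (s - 1) := by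
          rw [Finset.mul_sum]; exact Finset.sum_le_sum fun n _ => hhead n
      _ ≤ x ^ (-s) * (x ^ s / s) := by
          gcongr
          simpa [hx_def] using sum_range_add_one_rpow_sub_one_le hs₀ hs₁ (m + 1)
      _ = 1 / s := by rw [rpow_neg hx.le]; field_simp
  have htail_le' : ∑' k, g (k + (m + 1)) ≤ 1 / s :=
    calc ∑' k, g (k + (m + 1)) ≤ ∑' k : ℕ, x ^ s * (x + k + 1) ^ (-s - 1) :=
          hg_tail.tsum_le_tsum htail (htail_summable.mul_left _)
      _ ≤ x ^ s * (x ^ (-s) / s) := by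
          rw [tsum_mul_left]; gcongr
      _ = 1 / s := by rw [rpow_neg hx.le]; field_simp
  refine ⟨hg_summable, ?_⟩
  rw [← hg_summable.sum_add_tsum_nat_add (m + 1)]
  exact (add_le_add hhead_le htail_le').trans_eq (by ring)

lemma two_mul_abs_mul_abs_le {u v r : ℝ} (hr : 0 < r) :
    2 * (|u| * |v|) ≤ u ^ 2 * r + v ^ 2 / r := by
  have key : u ^ 2 * r + v ^ 2 / r - 2 * (|u| * |v|) = (|u| * r - |v|) ^ 2 / r := by
    field_simp
    rw [← sq_abs u, ← sq_abs v]
    ring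
  have : 0 ≤ (|u| * r - |v|) ^ 2 / r := by positivity
  linarith

section SchurTest

variable {ι : Type*} {K : ι → ι → ℝ} {p : ι → ℝ} {C : ℝ} {a : ι → ℝ}

lemma summable_and_tsum_sq_div_mul_le (hK : ∀ m n, 0 ≤ K m n) (hp : ∀ m, 0 < p m)
    (hrow_summable : ∀ m, Summable fun n => K m n * p n)
    (hrow : ∀ m, ∑' n, K m n * p n ≤ C * p m) (ha : Summable fun m => a m ^ 2) :
    Summable (fun q : ι × ι => a q.1 ^ 2 / p q.1 * (K q.1 q.2 * p q.2)) ∧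
      ∑' q : ι × ι, a q.1 ^ 2 / p q.1 * (K q.1 q.2 * p q.2) ≤ C * ∑' m, a m ^ 2 := by
  have hnonneg : ∀ q : ι × ι, 0 ≤ a q.1 ^ 2 / p q.1 * (K q.1 q.2 * p q.2) := fun q =>
    mul_nonneg (div_nonneg (sq_nonneg _) (hp _).le) (mul_nonneg (hK _ _) (hp _).le)
  have hrow_le : ∀ m, ∑' n, a m ^ 2 / p m * (K m n * p n) ≤ C * a m ^ 2 := fun m => by
    rw [tsum_mul_left]
    calc a m ^ 2 / p m * ∑' n, K m n * p n ≤ a m ^ 2 / p m * (C * p m) := by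
          gcongr
          · exact div_nonneg (sq_nonneg _) (hp m).le
          · exact hrow m
      _ = C * a m ^ 2 := by field_simp [(hp m).ne']
  have hrows : Summable fun m => ∑' n, a m ^ 2 / p m * (K m n * p n) :=
    (ha.mul_left C).of_nonneg_of_le (fun m => tsum_nonneg fun n => hnonneg (m, n)) hrow_le
  have hsummable : Summable (fun q : ι × ι => a q.1 ^ 2 / p q.1 * (K q.1 q.2 * p q.2)) :=
    (summable_prod_of_nonneg (f := fun q : ι × ι => a q.1 ^ 2 / p q.1 * (K q.1 q.2 * p q.2))
      hnonneg).2 ⟨fun m => (hrow_summable m).mul_left (a m ^ 2 / p m), hrows⟩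
  refine ⟨hsummable, ?_⟩
  calc ∑' q : ι × ι, a q.1 ^ 2 / p q.1 * (K q.1 q.2 * p q.2)
      = ∑' m, ∑' n, a m ^ 2 / p m * (K m n * p n) :=
        hsummable.tsum_prod' fun m => (hrow_summable m).mul_left (a m ^ 2 / p m)
    _ ≤ ∑' m, C * a m ^ 2 := hrows.tsum_le_tsum hrow_le (ha.mul_left C)
    _ = C * ∑' m, a m ^ 2 := tsum_mul_left

theorem schur_test (hK : ∀ m n, 0 ≤ K m n) (hK_symm : ∀ m n, K m n = K n m)
    (hp : ∀ m, 0 < p m) (hrow_summable : ∀ m, Summable fun n => K m n * p n)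
    (hrow : ∀ m, ∑' n, K m n * p n ≤ C * p m) (ha : Summable fun m => a m ^ 2) :
    Summable (fun q : ι × ι => |a q.1| * |a q.2| * K q.1 q.2) ∧
      ∑' q : ι × ι, |a q.1| * |a q.2| * K q.1 q.2 ≤ C * ∑' m, a m ^ 2 := by
  set M : ι × ι → ℝ := fun q => a q.1 ^ 2 / p q.1 * (K q.1 q.2 * p q.2)
  obtain ⟨hM, hM_le⟩ := summable_and_tsum_sq_div_mul_le hK hp hrow_summable hrow ha
  have hM_swap : Summable (M ∘ Prod.swap) := (Equiv.prodComm ι ι).summable_iff.2 hM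
  have hM_swap_eq : ∑' q, (M ∘ Prod.swap) q = ∑' q, M q := (Equiv.prodComm ι ι).tsum_eq M
  have hdom : ∀ q : ι × ι, |a q.1| * |a q.2| * K q.1 q.2 ≤ (M q + (M ∘ Prod.swap) q) / 2 := by
    rintro ⟨m, n⟩
    have hpm := hp m
    have hpn := hp n
    have := mul_le_mul_of_nonneg_right (two_mul_abs_mul_abs_le (u := a m) (v := a n)
      (div_pos hpn hpm)) (hK m n)
    simp only [M, Function.comp, Prod.swap, hK_symm n m]
    field_simp at this ⊢
    linarith
  have hsummable : Summable (fun q : ι × ι => |a q.1| * |a q.2| * K q.1 q.2) :=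
    ((hM.add hM_swap).div_const 2).of_nonneg_of_le
      (fun q => mul_nonneg (mul_nonneg (abs_nonneg _) (abs_nonneg _)) (hK _ _)) hdom
  refine ⟨hsummable, ?_⟩
  calc ∑' q : ι × ι, |a q.1| * |a q.2| * K q.1 q.2
      ≤ ∑' q, (M q + (M ∘ Prod.swap) q) / 2 :=
        hsummable.tsum_le_tsum hdom ((hM.add hM_swap).div_const 2)
    _ = ∑' q, M q := by
        rw [tsum_div_const, hM.tsum_add hM_swap, hM_swap_eq]; ring
    _ ≤ C * ∑' m, a m ^ 2 := hM_le

end SchurTest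

lemma inv_eq_integral_rpow {x : ℝ} (hx : 0 < x) : x⁻¹ = ∫ u in (0 : ℝ)..1, u ^ (x - 1) := by
  rw [integral_rpow (Or.inl (by linarith)), sub_add_cancel, one_rpow, zero_rpow hx.ne']
  simp

theorem sum_sum_mul_mul_inv_add_nonneg {ι : Type*} (s : Finset ι) (X c : ι → ℝ)
    (hX : ∀ i ∈ s, 0 < X i) :
    0 ≤ ∑ i ∈ s, ∑ j ∈ s, c i * c j * (X i + X j)⁻¹ := by
  have hXX : ∀ q ∈ s ×ˢ s, 0 < X q.1 + X q.2 := fun q hq =>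
    add_pos (hX _ (Finset.mem_product.1 hq).1) (hX _ (Finset.mem_product.1 hq).2)
  have hint : ∀ q ∈ s ×ˢ s, IntervalIntegrable
      (fun u : ℝ => c q.1 * c q.2 * u ^ (X q.1 + X q.2 - 1)) MeasureTheory.volume 0 1 :=
    fun q hq => ((intervalIntegral.intervalIntegrable_rpow' (by linarith [hXX q hq])).const_mul _)
  have hsq : ∀ u : ℝ, 0 < u → ∑ q ∈ s ×ˢ s, c q.1 * c q.2 * u ^ (X q.1 + X q.2 - 1)
      = (∑ i ∈ s, c i * u ^ (X i - 1 / 2)) ^ 2 := by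
    intro u hu
    rw [sq, Finset.sum_mul_sum, Finset.sum_product]
    refine Finset.sum_congr rfl fun i _ => Finset.sum_congr rfl fun j _ => ?_
    rw [show X i + X j - 1 = (X i - 1 / 2) + (X j - 1 / 2) by ring, rpow_add hu]
    ring
  calc (0 : ℝ)
      ≤ ∫ u in (0 : ℝ)..1, ∑ q ∈ s ×ˢ s, c q.1 * c q.2 * u ^ (X q.1 + X q.2 - 1) := by
        rw [intervalIntegral.integral_of_le zero_le_one]
        refine MeasureTheory.setIntegral_nonneg measurableSet_Ioc fun u hu => ?_
        rw [hsq u hu.1]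
        exact sq_nonneg _
    _ = ∑ q ∈ s ×ˢ s, c q.1 * c q.2 * (X q.1 + X q.2)⁻¹ := by
        rw [intervalIntegral.integral_finsetSum hint]
        refine Finset.sum_congr rfl fun q hq => ?_
        rw [intervalIntegral.integral_const_mul, inv_eq_integral_rpow (hXX q hq)]
    _ = ∑ i ∈ s, ∑ j ∈ s, c i * c j * (X i + X j)⁻¹ := Finset.sum_product _ _ _

theorem tsum_mul_mul_inv_add_nonneg {ι : Type*} {X c : ι → ℝ} (hX : ∀ i, 0 < X i)
    (hf : Summable fun q : ι × ι => c q.1 * c q.2 * (X q.1 + X q.2)⁻¹) :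
    0 ≤ ∑' q : ι × ι, c q.1 * c q.2 * (X q.1 + X q.2)⁻¹ :=
  ge_of_tendsto' (hf.hasSum.comp (tendsto_finsetProd_atTop.comp tendsto_atTop_diagonal))
    fun s => (sum_sum_mul_mul_inv_add_nonneg s X c fun i _ => hX i).trans_eq
      (Finset.sum_product s s fun q : ι × ι => c q.1 * c q.2 * (X q.1 + X q.2)⁻¹).symm

noncomputable def hardyKernel (α β : ℝ) (m n : ℕ) : ℝ :=
  ((((m : ℝ) + 1) ^ α + ((n : ℝ) + 1) ^ α) * ((m : ℝ) + 1) ^ β * ((n : ℝ) + 1) ^ β)⁻¹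

lemma hardyKernel_nonneg (α β : ℝ) (m n : ℕ) : 0 ≤ hardyKernel α β m n := by
  unfold hardyKernel; positivity

lemma hardyKernel_comm (α β : ℝ) (m n : ℕ) : hardyKernel α β m n = hardyKernel α β n m := by
  unfold hardyKernel; ring

lemma mul_hardyKernel (α β x : ℝ) (m n : ℕ) : x * hardyKernel α β m n =
    x / ((((m : ℝ) + 1) ^ α + ((n : ℝ) + 1) ^ α) * ((m : ℝ) + 1) ^ β * ((n : ℝ) + 1) ^ β) :=
  (div_eq_mul_inv _ _).symm

lemma hardyKernel_eq_mul_inv_add (α β : ℝ) (m n : ℕ) :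
    hardyKernel α β m n = (((m : ℝ) + 1) ^ β)⁻¹ * (((n : ℝ) + 1) ^ β)⁻¹ *
      (((m : ℝ) + 1) ^ α + ((n : ℝ) + 1) ^ α)⁻¹ := by
  rw [hardyKernel, mul_inv, mul_inv]; ring

lemma hardyKernel_mul_rpow_neg_half {α β : ℝ} (hαβ : α + 2 * β = 1) (m n : ℕ) :
    hardyKernel α β m n * ((n : ℝ) + 1) ^ (-(1 / 2) : ℝ) =
      ((m : ℝ) + 1) ^ (-(1 / 2) : ℝ) * (((m : ℝ) + 1) ^ (α / 2) * ((n : ℝ) + 1) ^ (α / 2 - 1) /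
        (((m : ℝ) + 1) ^ (2 * (α / 2)) + ((n : ℝ) + 1) ^ (2 * (α / 2)))) := by
  have hx : (0 : ℝ) < (m : ℝ) + 1 := by positivity
  have hy : (0 : ℝ) < (n : ℝ) + 1 := by positivity
  have hx_exp : ((m : ℝ) + 1) ^ (-(1 / 2) : ℝ) * ((m : ℝ) + 1) ^ (α / 2) =
      (((m : ℝ) + 1) ^ β)⁻¹ := by
    rw [← rpow_neg hx.le, ← rpow_add hx]; congr 1; linarith
  have hy_exp : ((n : ℝ) + 1) ^ (α / 2 - 1) =
      (((n : ℝ) + 1) ^ β)⁻¹ * ((n : ℝ) + 1) ^ (-(1 / 2) : ℝ) := by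
    rw [← rpow_neg hy.le, ← rpow_add hy]; congr 1; linarith
  rw [hy_exp, mul_div_cancel₀ α two_ne_zero, hardyKernel_eq_mul_inv_add, ← hx_exp]
  ring

theorem summable_and_tsum_hardyKernel_mul_le {α β : ℝ} (hα : 0 < α) (hβ : 0 < β)
    (hαβ : α + 2 * β = 1) (m : ℕ) :
    Summable (fun n : ℕ => hardyKernel α β m n * ((n : ℝ) + 1) ^ (-(1 / 2) : ℝ)) ∧
      ∑' n : ℕ, hardyKernel α β m n * ((n : ℝ) + 1) ^ (-(1 / 2) : ℝ) ≤
        4 / α * ((m : ℝ) + 1) ^ (-(1 / 2) : ℝ) := by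
  obtain ⟨hsummable, hle⟩ :=
    summable_and_tsum_rpow_mul_rpow_div_le (s := α / 2) (by positivity) (by linarith) m
  simp only [hardyKernel_mul_rpow_neg_half hαβ]
  refine ⟨hsummable.mul_left _, ?_⟩
  rw [tsum_mul_left, mul_comm (4 / α)]
  gcongr
  exact hle.trans_eq (by field_simp; norm_num)

theorem tsum_mul_mul_hardyKernel_nonneg (α β : ℝ) (b : ℕ → ℝ)
    (hb : Summable fun q : ℕ × ℕ => b q.1 * b q.2 * hardyKernel α β q.1 q.2) :
    0 ≤ ∑' q : ℕ × ℕ, b q.1 * b q.2 * hardyKernel α β q.1 q.2 := by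
  have hcauchy : ∀ q : ℕ × ℕ, b q.1 * b q.2 * hardyKernel α β q.1 q.2 =
      (b q.1 * (((q.1 : ℝ) + 1) ^ β)⁻¹) * (b q.2 * (((q.2 : ℝ) + 1) ^ β)⁻¹) *
        (((q.1 : ℝ) + 1) ^ α + ((q.2 : ℝ) + 1) ^ α)⁻¹ := fun q => by
    rw [hardyKernel_eq_mul_inv_add]; ring
  simp only [hcauchy] at hb ⊢
  exact tsum_mul_mul_inv_add_nonneg (X := fun i : ℕ => ((i : ℝ) + 1) ^ α)
    (c := fun i => b i * (((i : ℝ) + 1) ^ β)⁻¹) (fun i => by positivity) hb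

/-- Discrete Hardy-type bound: for `α, β > 0` with `α + 2β = 1`, the
bilinear form with kernel `1/((ℓ^α + ℓ′^α) ℓ^β ℓ′^β)` is nonnegative and bounded on `ℓ²`. -/
theorem discrete_hardy_type_bound (α β : ℝ) (hα : 0 < α) (hβ : 0 < β)
    (hαβ : α + 2 * β = 1) :
    ∃ C > (0:ℝ), ∀ a : ℕ → ℝ, Summable (fun ℓ : ℕ => (a (ℓ + 1)) ^ 2) →
      Summable (fun q : ℕ × ℕ =>
          |a (q.1 + 1)| * |a (q.2 + 1)| /
            (((((q.1 : ℝ) + 1)) ^ α + (((q.2 : ℝ) + 1)) ^ α)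
              * (((q.1 : ℝ) + 1)) ^ β * (((q.2 : ℝ) + 1)) ^ β))
      ∧ 0 ≤ (∑' q : ℕ × ℕ,
          a (q.1 + 1) * a (q.2 + 1) /
            (((((q.1 : ℝ) + 1)) ^ α + (((q.2 : ℝ) + 1)) ^ α)
              * (((q.1 : ℝ) + 1)) ^ β * (((q.2 : ℝ) + 1)) ^ β))
      ∧ (∑' q : ℕ × ℕ,
          a (q.1 + 1) * a (q.2 + 1) /
            (((((q.1 : ℝ) + 1)) ^ α + (((q.2 : ℝ) + 1)) ^ α)
              * (((q.1 : ℝ) + 1)) ^ β * (((q.2 : ℝ) + 1)) ^ β))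
          ≤ C * ∑' ℓ : ℕ, (a (ℓ + 1)) ^ 2 := by
  refine ⟨4 / α, by positivity, fun a ha => ?_⟩
  obtain ⟨habs, habs_le⟩ := schur_test (a := fun ℓ => a (ℓ + 1)) (hardyKernel_nonneg α β)
    (hardyKernel_comm α β) (fun n => by positivity)
    (fun m => (summable_and_tsum_hardyKernel_mul_le hα hβ hαβ m).1)
    (fun m => (summable_and_tsum_hardyKernel_mul_le hα hβ hαβ m).2) ha
  have hnorm : ∀ q : ℕ × ℕ, ‖a (q.1 + 1) * a (q.2 + 1) * hardyKernel α β q.1 q.2‖ =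
      |a (q.1 + 1)| * |a (q.2 + 1)| * hardyKernel α β q.1 q.2 := fun q => by
    rw [Real.norm_eq_abs, abs_mul, abs_mul, abs_of_nonneg (hardyKernel_nonneg α β _ _)]
  have hsigned : Summable fun q : ℕ × ℕ => a (q.1 + 1) * a (q.2 + 1) * hardyKernel α β q.1 q.2 :=
    habs.of_norm_bounded fun q => (hnorm q).le
  simp only [← mul_hardyKernel]
  refine ⟨habs, tsum_mul_mul_hardyKernel_nonneg α β (fun ℓ => a (ℓ + 1)) hsigned, ?_⟩
  calc ∑' q : ℕ × ℕ, a (q.1 + 1) * a (q.2 + 1) * hardyKernel α β q.1 q.2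
      ≤ ∑' q : ℕ × ℕ, |a (q.1 + 1)| * |a (q.2 + 1)| * hardyKernel α β q.1 q.2 :=
        hsigned.tsum_le_tsum (fun q => (le_abs_self _).trans_eq (hnorm q)) habs
    _ ≤ 4 / α * ∑' ℓ : ℕ, a (ℓ + 1) ^ 2 := habs_le
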